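/- In the setting of Lemma strongmaxlem (weakly reducible maximum with k ≤ i, s_{i,k} > 0 and s_{i,k} − s_{i,i+1} − 2a_{k,i+1} > 0): after shifting k to i+1, the new boundary sizes satisfy b′_ℓ = b_ℓ − s_{ℓ,k} + s_{ℓ,ℓ+1} + 2a_{k,ℓ+1} for each k ≤ ℓ ≤ i. -/

import Mathlib

open Finset

variable {V : Type*} [Fintype V] [DecidableEq V]

/-- The total weight of the boundary of `A`: the sum of the weights of the
edges with exactly one endpoint in `A`. -/
def boundarySize (w : V → V → ℝ) (A : Finset V) : ℝ :=
  ∑ u ∈ A, ∑ x ∈ Aᶜ, w u x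

/-- The pinchSlope of a vertex `v` with respect to a vertex set `A`: the total
weight of the edges from `v` to the complement of `A` minus the total weight
of the edges from `v` to `A`. -/
def pinchSlope (w : V → V → ℝ) (A : Finset V) (v : V) : ℝ :=
  ∑ x ∈ Aᶜ, w v x - ∑ x ∈ A, w v x

/-- `A` is pinch convex: for any sequence of vertices outside of `A`, if adding
all of them to `A` strictly decreases the boundary, then adding some proper
initial segment strictly increases the boundary. -/
def PinchConvex (w : V → V → ℝ) (A : Finset V) : Prop :=
  ∀ L : List V, (∀ x ∈ L, x ∉ A) →
    boundarySize w (A ∪ L.toFinset) < boundarySize w A →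
    ∃ k < L.length, boundarySize w A < boundarySize w (A ∪ (L.take k).toFinset)

/-- `A` is pinch concave: for any sequence of vertices of `A`, if removing
all of them from `A` strictly decreases the boundary, then removing some proper
initial segment strictly increases the boundary. -/
def PinchConcave (w : V → V → ℝ) (A : Finset V) : Prop :=
  ∀ L : List V, (∀ x ∈ L, x ∈ A) →
    boundarySize w (A \ L.toFinset) < boundarySize w A →
    ∃ k < L.length, boundarySize w A < boundarySize w (A \ (L.take k).toFinset)

/-- `A` is a pinch cluster: whenever adding a sequence of vertices to `A`, or
removing a sequence of vertices from `A`, strictly decreases the boundary, some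
proper initial segment of the sequence strictly increases the boundary. -/
def PinchCluster (w : V → V → ℝ) (A : Finset V) : Prop :=
  (∀ L : List V,
    boundarySize w (A ∪ L.toFinset) < boundarySize w A →
    ∃ k < L.length, boundarySize w A < boundarySize w (A ∪ (L.take k).toFinset)) ∧
  (∀ L : List V,
    boundarySize w (A \ L.toFinset) < boundarySize w A →
    ∃ k < L.length, boundarySize w A < boundarySize w (A \ (L.take k).toFinset))

/-- The vertex in (0-indexed) position `n` of the ordering `o`. -/
def vert {N : ℕ} [NeZero N] (o : Fin N ≃ V) (n : ℕ) : V := o (Fin.ofNat N n)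

/-- `A_i`: the set of the first `i` vertices of the ordering `o`. -/
def levelSet {N : ℕ} (o : Fin N ≃ V) (i : ℕ) : Finset V :=
  Finset.univ.filter fun x => (o.symm x : ℕ) < i

/-- `b_i`: the width of the ordering `o` at level `i`. -/
def levelWidth (w : V → V → ℝ) {N : ℕ} (o : Fin N ≃ V) (i : ℕ) : ℝ :=
  boundarySize w (levelSet o i)

/-- `s_{i,j}` (with `j` 0-indexed): the pinchSlope of the vertex in position `j`
with respect to the set `A_i` of the first `i` vertices. -/
def sl (w : V → V → ℝ) {N : ℕ} [NeZero N] (o : Fin N ≃ V) (i j : ℕ) : ℝ :=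
  pinchSlope w (levelSet o i) (vert o j)

/-- The width of an ordering: the list of all the level widths, rearranged
in non-increasing order (compared lexicographically). -/
noncomputable def widthList (w : V → V → ℝ) {N : ℕ} (o : Fin N ≃ V) : List ℝ :=
  ((List.range (N + 1)).map (levelWidth w o)).insertionSort (· ≥ ·)

/-- `[p,q]` is a locally minimal flat of the ordering `o`. -/
def IsMinimalFlat (w : V → V → ℝ) {N : ℕ} (o : Fin N ≃ V) (p q : ℕ) : Prop :=
  0 < p ∧ p ≤ q ∧ q < N ∧
  (∀ r, p ≤ r → r ≤ q → levelWidth w o r = levelWidth w o p) ∧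
  levelWidth w o p < levelWidth w o (p - 1) ∧
  levelWidth w o p < levelWidth w o (q + 1)

/-- `[p,q]` is a locally maximal flat of the ordering `o`. -/
def IsMaximalFlat (w : V → V → ℝ) {N : ℕ} (o : Fin N ≃ V) (p q : ℕ) : Prop :=
  0 < p ∧ p ≤ q ∧ q < N ∧
  (∀ r, p ≤ r → r ≤ q → levelWidth w o r = levelWidth w o p) ∧
  levelWidth w o (p - 1) < levelWidth w o p ∧
  levelWidth w o (q + 1) < levelWidth w o p

/-- `m` is a local minimum: it lies in a locally minimal flat. -/
def IsLocalMinLevel (w : V → V → ℝ) {N : ℕ} (o : Fin N ≃ V) (m : ℕ) : Prop :=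
  ∃ p q, IsMinimalFlat w o p q ∧ p ≤ m ∧ m ≤ q

/-- The locally maximal flat `[i,j]` is weakly reducible.  Here `jm` is the
right end of the preceding minimal flat and `ip` the left end of the following
minimal flat, with no local minima strictly in between; the witness index `k`
(0-indexed vertex position, so paper index `k+1`) satisfies condition (1) or
condition (2) of the definition. -/
def WeaklyReducibleAt (w : V → V → ℝ) {N : ℕ} [NeZero N] (o : Fin N ≃ V) (i j : ℕ) : Prop :=
  ∃ jm ip : ℕ,
    (∃ im, IsMinimalFlat w o im jm) ∧ (∃ jp, IsMinimalFlat w o ip jp) ∧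
    jm < i ∧ j < ip ∧
    (∀ m, jm < m → m < ip → ¬ IsLocalMinLevel w o m) ∧
    ∃ k, jm ≤ k ∧ k < ip ∧
      ((k < i ∧ 0 < sl w o i k ∧
          0 < sl w o i k - sl w o i i - 2 * w (vert o k) (vert o i)) ∨
       (j ≤ k ∧ sl w o j k < 0 ∧
          0 < -(sl w o j k) + sl w o j (j - 1) - 2 * w (vert o k) (vert o (j - 1))))

/-- An ordering is strongly irreducible if none of its locally maximal flats
is weakly reducible. -/
def StronglyIrreducible (w : V → V → ℝ) {N : ℕ} [NeZero N] (o : Fin N ≃ V) : Prop :=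
  ∀ i j, IsMaximalFlat w o i j → ¬ WeaklyReducibleAt w o i j

/-! Moving a single vertex in or out of a set changes the boundary by that vertex's slope, and
removing `y` raises the slope of every other vertex `x` by `2 a_{x,y}` (the edge `xy` switches from
inside to outside). Since `A'_ℓ` is `A_ℓ` with `v_k` removed and then `v_{ℓ+1}` added, the formula
follows. -/

section Boundary

variable {w : V → V → ℝ}

lemma pinchSlope_erase (A : Finset V) {y : V} (hy : y ∈ A) (x : V) :
    pinchSlope w (A.erase y) x = pinchSlope w A x + 2 * w x y := by
  unfold pinchSlope
  rw [compl_erase, sum_insert (by simp [hy]), ← sum_erase_add A (w x) hy]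
  ring

lemma boundarySize_insert (hsym : ∀ u v, w u v = w v u) (hdiag : ∀ v, w v v = 0)
    {A : Finset V} {x : V} (hx : x ∉ A) :
    boundarySize w (insert x A) = boundarySize w A + pinchSlope w A x := by
  have hxc : x ∈ Aᶜ := mem_compl.2 hx
  have hsymsum : ∑ u ∈ A, w u x = ∑ z ∈ A, w x z := sum_congr rfl fun u _ => hsym u x
  unfold boundarySize pinchSlope
  rw [compl_insert, sum_insert hx]
  simp only [← sum_erase_add Aᶜ _ hxc, hdiag, add_zero]
  rw [sum_add_distrib, ← hsymsum]
  ring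

lemma boundarySize_erase (hsym : ∀ u v, w u v = w v u) (hdiag : ∀ v, w v v = 0)
    {A : Finset V} {y : V} (hy : y ∈ A) :
    boundarySize w (A.erase y) = boundarySize w A - pinchSlope w A y := by
  have h := boundarySize_insert hsym hdiag (notMem_erase y A)
  rw [insert_erase hy, pinchSlope_erase A hy, hdiag] at h
  linarith

end Boundary

omit [DecidableEq V] in
lemma vert_mem_levelSet_iff {N : ℕ} [NeZero N] (o : Fin N ≃ V) {n : ℕ} (hn : n < N) (m : ℕ) :
    vert o n ∈ levelSet o m ↔ n < m := by
  simp [vert, levelSet, Nat.mod_eq_of_lt hn]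

/-- Positions are 0-indexed: the paper's `k ≤ ℓ` reads `k < ℓ` here, and `vert o ℓ` is the
paper's `v_{ℓ+1}`. -/
theorem shifted_levelWidth_general (w : V → V → ℝ)
    (hsym : ∀ u v, w u v = w v u)
    (hdiag : ∀ v, w v v = 0) {N : ℕ} [NeZero N] (o : Fin N ≃ V)
    (k ℓ i : ℕ) (hkl : k < ℓ) (hli : ℓ ≤ i) (hiN : i < N) :
    boundarySize w (insert (vert o ℓ) ((levelSet o ℓ).erase (vert o k))) =
      levelWidth w o ℓ - sl w o ℓ k + sl w o ℓ ℓ + 2 * w (vert o k) (vert o ℓ) := by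
  have hk : vert o k ∈ levelSet o ℓ := (vert_mem_levelSet_iff o (by omega) ℓ).2 hkl
  have hℓ : vert o ℓ ∉ (levelSet o ℓ).erase (vert o k) := fun h =>
    lt_irrefl ℓ ((vert_mem_levelSet_iff o (by omega) ℓ).1 (mem_of_mem_erase h))
  rw [boundarySize_insert hsym hdiag hℓ, boundarySize_erase hsym hdiag hk,
    pinchSlope_erase _ hk, hsym (vert o ℓ) (vert o k)]
  unfold levelWidth sl
  ring

/-- After shifting the vertex in position `k` to position `i+1`, the new set at
level `ℓ` (for `k ≤ ℓ ≤ i`, paper indexing; here `k` is the 0-indexed position,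
so `k < ℓ ≤ i`) is `A'_ℓ = (A_ℓ \ {v_k}) ∪ {v_{ℓ+1}}`, and its boundary size is
`b'_ℓ = b_ℓ - s_{ℓ,k} + s_{ℓ,ℓ+1} + 2 a_{k,ℓ+1}`. -/
theorem shifted_levelWidth (w : V → V → ℝ)
    (hw0 : ∀ u v, 0 ≤ w u v) (hsym : ∀ u v, w u v = w v u)
    (hdiag : ∀ v, w v v = 0) {N : ℕ} [NeZero N] (o : Fin N ≃ V)
    (k ℓ i : ℕ) (hkl : k < ℓ) (hli : ℓ ≤ i) (hiN : i < N) :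
    boundarySize w (insert (vert o ℓ) ((levelSet o ℓ).erase (vert o k))) =
      levelWidth w o ℓ - sl w o ℓ k + sl w o ℓ ℓ + 2 * w (vert o k) (vert o ℓ) :=
  shifted_levelWidth_general w hsym hdiag o k ℓ i hkl hli hiN
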